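/- Let P₁ be positive semidefinite, P₂ skew-Hermitian, with A = P₁ + P₂ positive definite, and Σ Hermitian positive definite. Then ρ((Σ + P₁)^{-1}(Σ - P₂)(Σ + P₂)^{-1}(Σ - P₁)) < 1. -/

import Mathlib

open Matrix ComplexOrder

noncomputable def specNorm {n : ℕ} (M : Matrix (Fin n) (Fin n) ℂ) : ℝ :=
  ‖Matrix.toEuclideanCLM (𝕜 := ℂ) M‖

noncomputable def evnorm {n : ℕ} (x : Fin n → ℂ) : ℝ :=
  ‖(WithLp.equiv 2 (Fin n → ℂ)).symm x‖

/-- `P` is positive semidefinite in the (possibly non-Hermitian) sense: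
`Re (x* P x) ≥ 0` for all `x`. -/
def IsPSD {n : ℕ} (P : Matrix (Fin n) (Fin n) ℂ) : Prop :=
  ∀ x : Fin n → ℂ, 0 ≤ (star x ⬝ᵥ P *ᵥ x).re

/-- `P` is positive definite in the (possibly non-Hermitian) sense:
`Re (x* P x) > 0` for all nonzero `x`. -/
def IsPD {n : ℕ} (P : Matrix (Fin n) (Fin n) ℂ) : Prop :=
  ∀ x : Fin n → ℂ, x ≠ 0 → 0 < (star x ⬝ᵥ P *ᵥ x).re

/-- `Σ^{-1/2} P Σ^{-1/2}` where `Σ^{1/2}` is the HPD square root of the HPD matrix `Sg`. -/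
noncomputable def tild {n : ℕ} (Sg P : Matrix (Fin n) (Fin n) ℂ) (hS : Sg.PosDef) :
    Matrix (Fin n) (Fin n) ℂ :=
  (hS.posSemidef.1.eigenvectorUnitary.1 * diagonal ((↑) ∘ (√·) ∘ hS.posSemidef.1.eigenvalues) *
      (star hS.posSemidef.1.eigenvectorUnitary : Matrix (Fin n) (Fin n) ℂ))⁻¹ * P *
    (hS.posSemidef.1.eigenvectorUnitary.1 * diagonal ((↑) ∘ (√·) ∘ hS.posSemidef.1.eigenvalues) *
      (star hS.posSemidef.1.eigenvectorUnitary : Matrix (Fin n) (Fin n) ℂ))⁻¹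

/-- PD (in the real-part sense) matrices are invertible. -/
lemma IsPD.isUnit' {n : ℕ} {M : Matrix (Fin n) (Fin n) ℂ} (h : IsPD M) : IsUnit M := by
  rw [Matrix.isUnit_iff_isUnit_det, isUnit_iff_ne_zero]
  intro hdet
  obtain ⟨v, hv, hMv⟩ := (Matrix.exists_mulVec_eq_zero_iff).2 hdet
  have := h v hv
  rw [hMv] at this
  simp at this

lemma conj_quad {n : ℕ} (M : Matrix (Fin n) (Fin n) ℂ) (x : Fin n → ℂ) :
    star x ⬝ᵥ Mᴴ *ᵥ x = star (star x ⬝ᵥ M *ᵥ x) := by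
  rw [Matrix.star_dotProduct, Matrix.star_mulVec, conjTranspose_conjTranspose,
    ← Matrix.dotProduct_mulVec]

lemma quad_transfer {n : ℕ} (B C : Matrix (Fin n) (Fin n) ℂ) (v : Fin n → ℂ) :
    star (B *ᵥ v) ⬝ᵥ C *ᵥ (B *ᵥ v) = star v ⬝ᵥ (Bᴴ * C * B) *ᵥ v := by
  rw [Matrix.star_mulVec, Matrix.mulVec_mulVec, Matrix.dotProduct_mulVec,
    Matrix.vecMul_vecMul, ← Matrix.dotProduct_mulVec, Matrix.mul_assoc]

theorem stmt12 {n : ℕ} (P1 P2 A Sg : Matrix (Fin n) (Fin n) ℂ)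
    (h1 : IsPSD P1) (h2 : P2ᴴ = -P2) (hA : A = P1 + P2) (hApd : IsPD A)
    (hS : Sg.PosDef) :
    spectralRadius ℂ ((Sg + P1)⁻¹ * (Sg - P2) * (Sg + P2)⁻¹ * (Sg - P1)) < 1 := by
  set M := (Sg + P1)⁻¹ * (Sg - P2) * (Sg + P2)⁻¹ * (Sg - P1) with hM
  -- Re of skew term vanishes
  have hskew : ∀ x : Fin n → ℂ, (star x ⬝ᵥ P2 *ᵥ x).re = 0 := by
    intro x
    have := conj_quad P2 x
    rw [h2] at this
    have h' : (star x ⬝ᵥ (-P2) *ᵥ x) = star (star x ⬝ᵥ P2 *ᵥ x) := this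
    rw [Matrix.neg_mulVec, dotProduct_neg] at h'
    have := congrArg Complex.re h'
    simp only [Complex.neg_re, Complex.conj_re, RCLike.star_def] at this
    linarith [this]
  have hSre : ∀ x : Fin n → ℂ, x ≠ 0 → 0 < (star x ⬝ᵥ Sg *ᵥ x).re := by
    intro x hx
    have := hS.dotProduct_mulVec_pos hx
    rw [Complex.lt_def] at this
    simpa using this.1
  -- Sg + P1 and Sg + P2 are PD (real-part sense), hence invertible
  have hpd1 : IsPD (Sg + P1) := by
    intro x hx
    rw [Matrix.add_mulVec, dotProduct_add, Complex.add_re]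
    have := h1 x
    linarith [hSre x hx]
  have hpd2 : IsPD (Sg + P2) := by
    intro x hx
    rw [Matrix.add_mulVec, dotProduct_add, Complex.add_re, hskew x]
    linarith [hSre x hx]
  have hu1 : IsUnit (Sg + P1) := hpd1.isUnit'
  have hu2 : IsUnit (Sg + P2) := hpd2.isUnit'
  have hu1d : IsUnit (Sg + P1).det := (Matrix.isUnit_iff_isUnit_det _).1 hu1
  have hu2d : IsUnit (Sg + P2).det := (Matrix.isUnit_iff_isUnit_det _).1 hu2
  have hSu : IsUnit Sg := hS.isUnit
  have hSud : IsUnit Sg.det := (Matrix.isUnit_iff_isUnit_det _).1 hSu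
  have hinv1 : Sg * Sg⁻¹ = 1 := Matrix.mul_nonsing_inv _ hSud
  have hinv2 : Sg⁻¹ * Sg = 1 := Matrix.nonsing_inv_mul _ hSud
  have hherm : Sgᴴ = Sg := hS.isHermitian
  -- key matrix identity
  have key : ∀ B : Matrix (Fin n) (Fin n) ℂ,
      (Sg + B)ᴴ * Sg⁻¹ * (Sg + B)
        = (Sg - B)ᴴ * Sg⁻¹ * (Sg - B) + ((B + Bᴴ) + (B + Bᴴ)) := by
    intro B
    have e1 : Sg * Sg⁻¹ * Sg = Sg := by rw [hinv1, one_mul]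
    have e2 : Sg * Sg⁻¹ * B = B := by rw [hinv1, one_mul]
    have e3 : Bᴴ * Sg⁻¹ * Sg = Bᴴ := by rw [Matrix.mul_assoc, hinv2, mul_one]
    simp only [conjTranspose_add, conjTranspose_sub, hherm, add_mul, mul_add, sub_mul,
      mul_sub, e1, e2, e3]
    abel
  -- the quadratic identity
  have quadkey : ∀ (B : Matrix (Fin n) (Fin n) ℂ) (v : Fin n → ℂ),
      (star ((Sg + B) *ᵥ v) ⬝ᵥ Sg⁻¹ *ᵥ ((Sg + B) *ᵥ v)).re
        = (star ((Sg - B) *ᵥ v) ⬝ᵥ Sg⁻¹ *ᵥ ((Sg - B) *ᵥ v)).re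
          + 4 * (star v ⬝ᵥ B *ᵥ v).re := by
    intro B v
    have hb : (star v ⬝ᵥ Bᴴ *ᵥ v).re = (star v ⬝ᵥ B *ᵥ v).re := by
      rw [conj_quad]; exact Complex.conj_re _
    rw [quad_transfer, quad_transfer, key B]
    simp only [Matrix.add_mulVec, dotProduct_add, Complex.add_re, hb]
    ring
  -- every spectral value has norm < 1
  have hmain : ∀ μ ∈ spectrum ℂ M, ‖μ‖ < 1 := by
    intro μ hμ
    rw [spectrum.mem_iff] at hμ
    have hdet : ((algebraMap ℂ (Matrix (Fin n) (Fin n) ℂ)) μ - M).det = 0 := by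
      by_contra h
      exact hμ ((Matrix.isUnit_iff_isUnit_det _).2 (isUnit_iff_ne_zero.2 h))
    obtain ⟨v, hv, hv0⟩ := (Matrix.exists_mulVec_eq_zero_iff).2 hdet
    have heig : M *ᵥ v = μ • v := by
      have := hv0
      rw [Matrix.sub_mulVec] at this
      have h' : (algebraMap ℂ (Matrix (Fin n) (Fin n) ℂ)) μ *ᵥ v = μ • v := by
        rw [Algebra.algebraMap_eq_smul_one, Matrix.smul_mulVec, Matrix.one_mulVec]
      rw [h', sub_eq_zero] at this
      exact this.symm
    -- set up w
    set w : Fin n → ℂ := (Sg + P2)⁻¹ *ᵥ ((Sg - P1) *ᵥ v) with hw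
    have hMv : M *ᵥ v = (Sg + P1)⁻¹ *ᵥ ((Sg - P2) *ᵥ w) := by
      rw [hM, hw]
      simp only [Matrix.mulVec_mulVec, Matrix.mul_assoc]
    have hstep1 : (Sg - P2) *ᵥ w = (Sg + P1) *ᵥ (μ • v) := by
      have := congrArg (fun x => (Sg + P1) *ᵥ x) (hMv.symm.trans heig)
      simpa [Matrix.mulVec_mulVec, ← Matrix.mul_assoc, Matrix.mul_nonsing_inv _ hu1d,
        Matrix.one_mulVec] using this
    have hstep2 : (Sg + P2) *ᵥ w = (Sg - P1) *ᵥ v := by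
      rw [hw, Matrix.mulVec_mulVec, Matrix.mul_nonsing_inv _ hu2d, Matrix.one_mulVec]
    -- N values
    set N : (Fin n → ℂ) → ℝ := fun x => (star x ⬝ᵥ Sg⁻¹ *ᵥ x).re with hN
    have c1 : N ((Sg + P1) *ᵥ v) = N ((Sg - P1) *ᵥ v) + 4 * (star v ⬝ᵥ P1 *ᵥ v).re :=
      quadkey P1 v
    have c2 : N ((Sg + P2) *ᵥ w) = N ((Sg - P2) *ᵥ w) := by
      have := quadkey P2 w
      rw [hskew w] at this
      simpa only [mul_zero, add_zero] using this
    have c3 : N ((Sg + P1) *ᵥ (μ • v)) = ‖μ‖ ^ 2 * N ((Sg + P1) *ᵥ v) := by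
      rw [hN]
      simp only [Matrix.mulVec_smul, star_smul, smul_dotProduct, dotProduct_smul,
        smul_eq_mul, ← mul_assoc]
      rw [RCLike.star_def, Complex.mul_conj, Complex.re_ofReal_mul,
        Complex.normSq_eq_norm_sq]
    -- positivity
    have hinvpd : Sg⁻¹.PosDef := hS.inv
    have hvz : (Sg + P1) *ᵥ v ≠ 0 := by
      intro h
      have := hpd1 v hv
      rw [h] at this
      simp at this
    have hNpos : 0 < N ((Sg + P1) *ᵥ v) := by
      have := hinvpd.dotProduct_mulVec_pos hvz
      rw [Complex.lt_def] at this
      simpa [hN] using this.1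
    have hre1 : 0 < (star v ⬝ᵥ P1 *ᵥ v).re := by
      have := hApd v hv
      rw [hA, Matrix.add_mulVec, dotProduct_add, Complex.add_re, hskew v] at this
      linarith
    -- combine
    have hfinal : ‖μ‖ ^ 2 * N ((Sg + P1) *ᵥ v) = N ((Sg + P1) *ᵥ v)
        - 4 * (star v ⬝ᵥ P1 *ᵥ v).re := by
      rw [← c3, ← hstep1, ← c2, hstep2]
      linarith [c1]
    nlinarith [norm_nonneg μ, sq_nonneg (‖μ‖ - 1)]
  -- conclude
  have hfin := Matrix.finite_spectrum (R := ℂ) M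
  rw [spectralRadius]
  have hle : ⨆ k ∈ spectrum ℂ M, (‖k‖₊ : ENNReal)
      ≤ hfin.toFinset.sup (fun k => (‖k‖₊ : ENNReal)) := by
    apply iSup₂_le
    intro k hk
    exact Finset.le_sup (f := fun k => ((‖k‖₊ : NNReal) : ENNReal)) (hfin.mem_toFinset.2 hk)
  refine lt_of_le_of_lt hle ?_
  have hbot : (⊥ : ENNReal) < 1 := by norm_num
  rw [Finset.sup_lt_iff hbot]
  intro k hk
  have := hmain k (hfin.mem_toFinset.1 hk)
  rw [show (1 : ENNReal) = ((1 : NNReal) : ENNReal) by norm_num, ENNReal.coe_lt_coe]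
  rwa [← NNReal.coe_lt_coe, coe_nnnorm, NNReal.coe_one]
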